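/- arXiv:2307.15195 — 4 statements merged into one kernel-verified Lean document; each statement's English description precedes it below -/
import Mathlib

section
/- Let h be an orientation-preserving real-analytic diffeomorphism of the circle ℝ/ℤ, let α ∈ ℝ, and let g = h⁻¹ ∘ R_α ∘ h, where R_α(x) = x + α is the rigid rotation. Then the Borel probability measure μ on ℝ/ℤ with density (h'(x))² / ∫₀¹ (h'(t))² dt with respect to Lebesgue measure is a (-1)-measure for g: ∫ φ(x) dμ(x) = ∫ g'(g⁻¹(x)) φ(g⁻¹(x)) dμ(x) for every continuous function φ on ℝ/ℤ. -/
/-!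
Write `g = h⁻¹ ∘ R_α ∘ h`. Differentiating `h ∘ g = R_α ∘ h` gives `h'(g x) g'(x) = h'(x)`, so the
density `ρ = (h')² / ∫ (h')²` satisfies `ρ(g x) g'(x)² = ρ(x)`. The substitution `y = g x` over one
period, legitimate for a lift of degree one, turns `∫ ρ(y) g'(g⁻¹ y) φ(g⁻¹ y) dy` into
`∫ ρ(g x) g'(x)² φ(x) dx = ∫ ρ φ`.
-/

open MeasureTheory Filter Metric Set

noncomputable section

/-- The circle ℝ/ℤ. -/
abbrev Circle1 : Type := AddCircle (1 : ℝ)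

/-- The canonical representative in `[0,1)` of a point of the circle. -/
noncomputable def circleRep (x : Circle1) : ℝ :=
  (AddCircle.equivIco 1 0 x : ℝ)

/-- The circle map induced by a lift `F : ℝ → ℝ`. -/
noncomputable def inducedCircleMap (F : ℝ → ℝ) (x : Circle1) : Circle1 :=
  ((F (circleRep x) : ℝ) : Circle1)

/-- The derivative of the circle map at a circle point, computed via the lift. -/
noncomputable def circleDeriv (F : ℝ → ℝ) (x : Circle1) : ℝ :=
  deriv F (circleRep x)

/-- A cubic critical circle map, described in terms of its lift `F`. -/
structure IsCubicCriticalCircleMap (F : ℝ → ℝ) : Prop where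
  analytic : ∀ x : ℝ, AnalyticAt ℝ F x
  lift : ∀ x : ℝ, F (x + 1) = F x + 1
  strictMono : StrictMono F
  deriv_pos : ∀ x : ℝ, (∀ n : ℤ, x ≠ n) → 0 < deriv F x
  deriv_zero : deriv F 0 = 0
  deriv2_zero : iteratedDeriv 2 F 0 = 0
  deriv3_pos : 0 < iteratedDeriv 3 F 0

/-- The rotation number of a circle map given by a lift `F`. -/
noncomputable def rotationNumber (F : ℝ → ℝ) : ℝ :=
  limUnder atTop (fun n : ℕ => F^[n] 0 / n)

/-- A (-1)-measure for a circle map with lift `F`. -/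
def IsNegOneMeasure (F : ℝ → ℝ) (μ : Measure Circle1) : Prop :=
  IsProbabilityMeasure μ ∧
    ∀ φ : C(Circle1, ℝ),
      ∫ x, φ x ∂μ =
        ∫ x, circleDeriv F (Function.invFun (inducedCircleMap F) x) *
              φ (Function.invFun (inducedCircleMap F) x) ∂μ


open Function

lemma circleRep_coe (t : ℝ) : circleRep (t : Circle1) = Int.fract t := by
  simp [circleRep]

lemma Function.Periodic.apply_circleRep_coe {β : Type*} {f : ℝ → β} (hf : Periodic f 1)
    (t : ℝ) : f (circleRep t) = f t := by
  rw [circleRep_coe, Int.fract, ← mul_one (⌊t⌋ : ℝ), hf.sub_int_mul_eq]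

lemma Function.Periodic.continuous_comp_circleRep {β : Type*} [TopologicalSpace β] {f : ℝ → β}
    (hf : Periodic f 1) (hc : Continuous f) : Continuous (f ∘ circleRep) :=
  AddCircle.liftIco_zero_continuous (by rw [← zero_add 1, hf]) hc.continuousOn

lemma integral_circle_eq_intervalIntegral {E : Type*} [NormedAddCommGroup E] [NormedSpace ℝ E]
    (f : Circle1 → E) : ∫ x, f x = ∫ t in (0 : ℝ)..1, f t := by
  simpa using (AddCircle.intervalIntegral_preimage 1 0 f).symm

namespace MeasureTheory

variable {α : Type*} [MeasurableSpace α] {μ : Measure α} {ρ : α → ℝ}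

lemma integral_withDensity_ofReal (hρ : Measurable ρ) (hρ0 : ∀ x, 0 ≤ ρ x) (f : α → ℝ) :
    ∫ x, f x ∂μ.withDensity (fun x => ENNReal.ofReal (ρ x)) = ∫ x, ρ x * f x ∂μ := by
  rw [integral_withDensity_eq_integral_toReal_smul hρ.ennreal_ofReal
    (ae_of_all _ fun _ => ENNReal.ofReal_lt_top)]
  simp_rw [ENNReal.toReal_ofReal (hρ0 _), smul_eq_mul]

lemma isProbabilityMeasure_withDensity_ofReal (hρ : Integrable ρ μ) (hρ0 : 0 ≤ᵐ[μ] ρ)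
    (hρ1 : ∫ x, ρ x ∂μ = 1) :
    IsProbabilityMeasure (μ.withDensity fun x => ENNReal.ofReal (ρ x)) := by
  constructor
  rw [withDensity_apply _ MeasurableSet.univ, Measure.restrict_univ,
    ← ofReal_integral_eq_lintegral_ofReal hρ hρ0, hρ1, ENNReal.ofReal_one]

end MeasureTheory

namespace CircleDeg1Lift

variable (F : CircleDeg1Lift)

lemma periodic_coe_comp : Periodic (fun x => ((F x : ℝ) : Circle1)) 1 := fun x => by
  simp only [map_add_one, AddCircle.coe_add_period]

lemma inducedCircleMap_coe (t : ℝ) : inducedCircleMap F t = F t :=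
  F.periodic_coe_comp.apply_circleRep_coe t

lemma continuous_inducedCircleMap (hF : Continuous F) : Continuous (inducedCircleMap F) :=
  F.periodic_coe_comp.continuous_comp_circleRep (by fun_prop)

lemma inducedCircleMap_one : inducedCircleMap (1 : CircleDeg1Lift) = id :=
  funext fun x => (AddCircle.equivIco 1 0).symm_apply_apply x

lemma inducedCircleMap_mul (G : CircleDeg1Lift) :
    inducedCircleMap ⇑(F * G) = inducedCircleMap F ∘ inducedCircleMap G :=
  funext fun x => (F.inducedCircleMap_coe (G (circleRep x))).symm

lemma periodic_deriv : Periodic (deriv F) 1 := fun x => by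
  rw [← deriv_comp_add_const]
  simp only [map_add_one, deriv_add_const]

lemma circleDeriv_coe (t : ℝ) : circleDeriv F t = deriv F t :=
  F.periodic_deriv.apply_circleRep_coe t

lemma continuous_circleDeriv (hF : ContDiff ℝ 1 F) : Continuous (circleDeriv F) :=
  F.periodic_deriv.continuous_comp_circleRep (hF.continuous_deriv le_rfl)

theorem integral_comp_inducedCircleMap_mul_circleDeriv (hF : ContDiff ℝ 1 F) {k : Circle1 → ℝ}
    (hk : Continuous k) : ∫ x, k (inducedCircleMap F x) * circleDeriv F x = ∫ x, k x := by
  have hkp : Periodic (fun t : ℝ => k t) 1 := fun t => by simp only [AddCircle.coe_add_period]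
  have hFd : ∀ x, HasDerivAt F (deriv F x) x := fun x =>
    (hF.differentiable one_ne_zero x).hasDerivAt
  calc ∫ x, k (inducedCircleMap F x) * circleDeriv F x
      = ∫ t in (0 : ℝ)..1, ((fun t : ℝ => k t) ∘ F) t * deriv F t := by
        simp only [integral_circle_eq_intervalIntegral, inducedCircleMap_coe, circleDeriv_coe,
          comp_apply]
    _ = ∫ t in F 0..F 0 + 1, k t := by
        rw [intervalIntegral.integral_comp_mul_deriv (fun x _ => hFd x)
          (hF.continuous_deriv le_rfl).continuousOn (by fun_prop), ← map_add_one, zero_add]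
    _ = ∫ x, k x := by
        rw [hkp.intervalIntegral_add_eq _ 0, zero_add, integral_circle_eq_intervalIntegral]

lemma leftInverse_inducedCircleMap_inv (u : CircleDeg1Liftˣ) :
    LeftInverse (inducedCircleMap ⇑u⁻¹) (inducedCircleMap u) := fun x => by
  rw [← comp_apply (f := inducedCircleMap _), ← inducedCircleMap_mul, ← Units.val_mul,
    inv_mul_cancel, Units.val_one, inducedCircleMap_one, id]

lemma invFun_inducedCircleMap (u : CircleDeg1Liftˣ) :
    invFun (inducedCircleMap u) = inducedCircleMap ⇑u⁻¹ :=
  invFun_eq_of_injective_of_rightInverse (leftInverse_inducedCircleMap_inv u).injective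
    fun x => by simpa only [inv_inv] using leftInverse_inducedCircleMap_inv u⁻¹ x

lemma continuous_units (u : CircleDeg1Liftˣ) : Continuous u :=
  (continuous_iff_surjective _).mpr (toOrderIso u).surjective

lemma exists_units_coe_eq {H : ℝ → ℝ} (hmono : StrictMono H) (hc : Continuous H)
    (hlift : ∀ x, H (x + 1) = H x + 1) : ∃ u : CircleDeg1Liftˣ, ⇑u = H := by
  let F : CircleDeg1Lift := ⟨⟨H, hmono.monotone⟩, hlift⟩
  obtain ⟨u, hu⟩ := isUnit_iff_bijective.mpr ⟨hmono.injective, (continuous_iff_surjective F).mp hc⟩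
  exact ⟨u, congrArg DFunLike.coe hu⟩

lemma hasDerivAt_units_inv (u : CircleDeg1Liftˣ) {f' y : ℝ} (hu : HasDerivAt u f' (u⁻¹ y))
    (hf' : f' ≠ 0) : HasDerivAt ⇑u⁻¹ f'⁻¹ y :=
  hu.of_local_left_inverse (continuous_units u⁻¹).continuousAt hf'
    (.of_forall (units_apply_inv_apply u))

theorem isNegOneMeasure_withDensity (g : CircleDeg1Liftˣ) (hg : ContDiff ℝ 1 g)
    {ρ : Circle1 → ℝ} (hρ : Continuous ρ) (hρ0 : ∀ x, 0 ≤ ρ x) (hρ1 : ∫ x, ρ x = 1)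
    (hρg : ∀ x, ρ (inducedCircleMap g x) * circleDeriv g x ^ 2 = ρ x) :
    IsNegOneMeasure g (volume.withDensity fun x => ENNReal.ofReal (ρ x)) := by
  refine ⟨isProbabilityMeasure_withDensity_ofReal
    (hρ.integrable_of_hasCompactSupport (.of_compactSpace _)) (ae_of_all _ hρ0) hρ1, fun φ => ?_⟩
  have hk : Continuous fun x =>
      ρ x * (circleDeriv g (inducedCircleMap ⇑g⁻¹ x) * φ (inducedCircleMap ⇑g⁻¹ x)) := by
    have := continuous_inducedCircleMap _ (continuous_units g⁻¹)
    have := (g : CircleDeg1Lift).continuous_circleDeriv hg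
    fun_prop
  rw [integral_withDensity_ofReal hρ.measurable hρ0, integral_withDensity_ofReal hρ.measurable hρ0,
    invFun_inducedCircleMap,
    ← (g : CircleDeg1Lift).integral_comp_inducedCircleMap_mul_circleDeriv hg hk]
  congr 1 with x
  rw [leftInverse_inducedCircleMap_inv g x]
  linear_combination -φ x * hρg x

section ConjTranslate

variable (u : CircleDeg1Liftˣ) (α : ℝ)

lemma coe_conj_translate_eq {G : ℝ → ℝ} (hG : ∀ x, u (G x) = u x + α) :
    ⇑(u⁻¹ * translate (.ofAdd α) * u) = G :=
  funext fun x => (toOrderIso u).injective <| by simp [hG, add_comm]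

lemma hasDerivAt_conj_translate {u' : ℝ → ℝ} (hu : ∀ x, HasDerivAt u (u' x) x)
    (hu' : ∀ x, u' x ≠ 0) (x : ℝ) :
    HasDerivAt ⇑(u⁻¹ * translate (.ofAdd α) * u)
      (u' x / u' ((u⁻¹ * translate (.ofAdd α) * u) x)) x := by
  rw [div_eq_inv_mul]
  exact (hasDerivAt_units_inv u (hu _) (hu' _)).comp x ((hu x).const_add α)

variable {u}

lemma deriv_conj_translate (hu : ContDiff ℝ 1 u) (hu' : ∀ x, deriv u x ≠ 0) (x : ℝ) :
    deriv ⇑(u⁻¹ * translate (.ofAdd α) * u) x =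
      deriv u x / deriv u ((u⁻¹ * translate (.ofAdd α) * u) x) :=
  (hasDerivAt_conj_translate u α (fun x => (hu.differentiable one_ne_zero x).hasDerivAt) hu'
    x).deriv

lemma deriv_comp_conj_translate_mul_deriv (hu : ContDiff ℝ 1 u) (hu' : ∀ x, deriv u x ≠ 0)
    (x : ℝ) :
    deriv u ((u⁻¹ * translate (.ofAdd α) * u) x) * deriv ⇑(u⁻¹ * translate (.ofAdd α) * u) x =
      deriv u x := by
  rw [deriv_conj_translate α hu hu', mul_div_cancel₀ _ (hu' _)]

lemma contDiff_conj_translate (hu : ContDiff ℝ 1 u) (hu' : ∀ x, deriv u x ≠ 0) :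
    ContDiff ℝ 1 ⇑(u⁻¹ * translate (.ofAdd α) * u) := by
  refine contDiff_one_iff_deriv.mpr ⟨fun x => ?_, ?_⟩
  · exact (hasDerivAt_conj_translate u α (fun x => (hu.differentiable one_ne_zero x).hasDerivAt)
      hu' x).differentiableAt
  rw [funext (deriv_conj_translate α hu hu')]
  exact (hu.continuous_deriv le_rfl).div
    ((hu.continuous_deriv le_rfl).comp (continuous_units _)) fun _ => hu' _

end ConjTranslate

end CircleDeg1Lift

/-- If `h` is an orientation-preserving real-analytic circle diffeomorphism
(with lift `H`), `α ∈ ℝ`, and `g = h⁻¹ ∘ R_α ∘ h` (with lift `G`, characterized by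
`H (G x) = H x + α`), then the probability measure with density `(h')² / ∫ (h')²` with respect
to the Haar (Lebesgue) measure on the circle is a (-1)-measure for `g`. -/
theorem density_is_neg_one_measure_of_conjugate_to_rotation
    (H : ℝ → ℝ) (α : ℝ)
    (hHa : ∀ x : ℝ, AnalyticAt ℝ H x)
    (hHlift : ∀ x : ℝ, H (x + 1) = H x + 1)
    (hHpos : ∀ x : ℝ, 0 < deriv H x)
    (G : ℝ → ℝ)
    (hG : ∀ x : ℝ, H (G x) = H x + α)
    (μ : Measure Circle1)
    (hμ : μ = (volume : Measure Circle1).withDensity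
        (fun x => ENNReal.ofReal
          ((deriv H (circleRep x)) ^ 2 / ∫ t in (0:ℝ)..1, (deriv H t) ^ 2))) :
    IsNegOneMeasure G μ := by
  have hH : ContDiff ℝ 1 H := contDiff_iff_contDiffAt.mpr fun x => (hHa x).contDiffAt
  obtain ⟨h, rfl⟩ := CircleDeg1Lift.exists_units_coe_eq (strictMono_of_deriv_pos hHpos)
    hH.continuous hHlift
  have hh' : ∀ x, deriv h x ≠ 0 := fun x => (hHpos x).ne'
  obtain rfl := CircleDeg1Lift.coe_conj_translate_eq h α hG
  set c := ∫ t in (0 : ℝ)..1, deriv h t ^ 2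
  have hc : 0 < c := intervalIntegral.intervalIntegral_pos_of_pos
    (((hH.continuous_deriv le_rfl).pow 2).intervalIntegrable 0 1) (fun x => pow_pos (hHpos x) 2)
    one_pos
  have hρ : Periodic (fun t => deriv h t ^ 2 / c) 1 := fun t => by
    simp only [(h : CircleDeg1Lift).periodic_deriv t]
  subst hμ
  refine CircleDeg1Lift.isNegOneMeasure_withDensity _
    (CircleDeg1Lift.contDiff_conj_translate α hH hh') (hρ.continuous_comp_circleRep (by fun_prop))
    (fun _ => div_nonneg (sq_nonneg _) hc.le) ?_ fun x => ?_
  · simp only [integral_circle_eq_intervalIntegral, hρ.apply_circleRep_coe,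
      intervalIntegral.integral_div]
    exact div_self hc.ne'
  · obtain ⟨t, rfl⟩ := QuotientAddGroup.mk_surjective x
    simp only [CircleDeg1Lift.inducedCircleMap_coe, CircleDeg1Lift.circleDeriv_coe,
      hρ.apply_circleRep_coe]
    rw [div_mul_eq_mul_div, ← mul_pow,
      CircleDeg1Lift.deriv_comp_conj_translate_mul_deriv α hH hh']

end
end

section
/- Let f be a C¹ orientation-preserving homeomorphism of the circle ℝ/ℤ and let μ be a (-1)-measure of f. Then for every point p ∈ ℝ/ℤ one has μ({p}) = f'(p) · μ({f(p)}). -/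
open MeasureTheory Filter Metric Set

noncomputable section

/-!
Test the defining identity of the (-1)-measure against tent functions `φₙ` of height `1` at `p`
and width `1/n`. On the left, `∫ φₙ dμ → μ {p}`. On the right, `f' ∘ f⁻¹` is bounded because
`f` is `C¹`, and `φₙ ∘ f⁻¹` concentrates at `f p`, so by dominated convergence the integrals tend
to `f'(p) · μ {f p}`. That `f⁻¹` makes sense and is continuous comes from the lift: `F` commutes
with integer translations and is a strictly increasing continuous surjection of `ℝ`, so the
induced map is a continuous bijection of the compact circle.
-/

open Topology

lemma coe_circleRep (x : Circle1) : ((circleRep x : ℝ) : Circle1) = x :=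
  (AddCircle.equivIco 1 0).symm_apply_apply x

lemma measurable_circleRep : Measurable circleRep := by
  have : Fact ((0 : ℝ) < 1) := ⟨one_pos⟩
  exact measurable_subtype_coe.comp (AddCircle.measurableEquivIco 1 0).measurable

lemma measurable_circleDeriv (F : ℝ → ℝ) : Measurable (circleDeriv F) :=
  (measurable_deriv F).comp measurable_circleRep

lemma circle_coe_eq_coe_iff {s t : ℝ} : (s : Circle1) = t ↔ ∃ n : ℤ, s = t + n := by
  rw [← sub_eq_zero, ← AddCircle.coe_sub, AddCircle.coe_eq_zero_iff]
  simp only [zsmul_eq_mul, mul_one]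
  exact exists_congr fun n => by constructor <;> intro h <;> linarith

section Lift

variable {F : ℝ → ℝ}

lemma map_add_int_of_map_add_one (hlift : ∀ x, F (x + 1) = F x + 1) (x : ℝ) (n : ℤ) :
    F (x + n) = F x + n := by
  have hper : Function.Periodic (fun x => F x - x) 1 := fun x => by
    simp only [hlift]; ring
  have := hper.int_mul n x
  simp only [mul_one] at this
  linarith

lemma coe_map_eq_coe_map (hlift : ∀ x, F (x + 1) = F x + 1) {s t : ℝ}
    (h : (s : Circle1) = t) : (F s : Circle1) = F t := by
  obtain ⟨n, rfl⟩ := circle_coe_eq_coe_iff.mp h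
  exact circle_coe_eq_coe_iff.mpr ⟨n, map_add_int_of_map_add_one hlift t n⟩

lemma coe_eq_coe_of_coe_map_eq (hlift : ∀ x, F (x + 1) = F x + 1) (hinj : F.Injective)
    {s t : ℝ} (h : (F s : Circle1) = F t) : (s : Circle1) = t := by
  obtain ⟨n, hn⟩ := circle_coe_eq_coe_iff.mp h
  rw [← map_add_int_of_map_add_one hlift] at hn
  exact circle_coe_eq_coe_iff.mpr ⟨n, hinj hn⟩

lemma inducedCircleMap_coe (hlift : ∀ x, F (x + 1) = F x + 1) (t : ℝ) :
    inducedCircleMap F t = F t :=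
  coe_map_eq_coe_map hlift (coe_circleRep t)

lemma continuous_inducedCircleMap (hlift : ∀ x, F (x + 1) = F x + 1) (hc : Continuous F) :
    Continuous (inducedCircleMap F) := by
  rw [(QuotientAddGroup.isQuotientMap_mk (AddSubgroup.zmultiples (1 : ℝ))).continuous_iff]
  have : inducedCircleMap F ∘ QuotientAddGroup.mk = fun t : ℝ => (F t : Circle1) :=
    funext (inducedCircleMap_coe hlift)
  rw [this]
  exact (AddCircle.continuous_mk' 1).comp hc

lemma injective_inducedCircleMap (hlift : ∀ x, F (x + 1) = F x + 1) (hinj : F.Injective) :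
    (inducedCircleMap F).Injective := fun a b h => by
  rw [← coe_circleRep a, ← coe_circleRep b]
  exact coe_eq_coe_of_coe_map_eq hlift hinj h

lemma surjective_inducedCircleMap (hlift : ∀ x, F (x + 1) = F x + 1) (hsurj : F.Surjective) :
    (inducedCircleMap F).Surjective := fun y => by
  obtain ⟨t, ht⟩ := hsurj (circleRep y)
  exact ⟨t, by rw [inducedCircleMap_coe hlift, ht, coe_circleRep]⟩

lemma isHomeomorph_inducedCircleMap (hlift : ∀ x, F (x + 1) = F x + 1) (hmono : StrictMono F)
    (hc : Continuous F) : IsHomeomorph (inducedCircleMap F) := by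
  have hsurj : F.Surjective :=
    (CircleDeg1Lift.mk ⟨F, hmono.monotone⟩ hlift).continuous_iff_surjective.mp hc
  exact isHomeomorph_iff_continuous_bijective.mpr ⟨continuous_inducedCircleMap hlift hc,
    injective_inducedCircleMap hlift hmono.injective, surjective_inducedCircleMap hlift hsurj⟩

lemma exists_bound_circleDeriv (hc : Continuous (deriv F)) : ∃ C, ∀ y, ‖circleDeriv F y‖ ≤ C := by
  obtain ⟨C, hC⟩ :=
    (isCompact_Icc (a := (0 : ℝ)) (b := 1)).exists_bound_of_continuousOn hc.continuousOn
  refine ⟨C, fun y => hC _ (Ico_subset_Icc_self ?_)⟩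
  simpa only [circleRep, zero_add] using (AddCircle.equivIco 1 0 y).2

end Lift

lemma IsHomeomorph.continuous_invFun {X Y : Type*} [TopologicalSpace X] [TopologicalSpace Y]
    [Nonempty X] {f : X → Y} (hf : IsHomeomorph f) : Continuous (Function.invFun f) := by
  have : Function.invFun f = (hf.homeomorph f).symm := funext fun y =>
    hf.injective ((Function.rightInverse_invFun hf.surjective y).trans
      ((hf.homeomorph f).apply_symm_apply y).symm)
  exact this ▸ (hf.homeomorph f).symm.continuous

lemma Function.Bijective.preimage_invFun_singleton {α β : Type*} [Nonempty α] {f : α → β}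
    (hf : f.Bijective) (a : α) : Function.invFun f ⁻¹' {a} = {f a} := by
  ext y
  simp only [mem_preimage, mem_singleton_iff]
  constructor
  · rintro rfl
    exact (Function.rightInverse_invFun hf.surjective y).symm
  · rintro rfl
    exact Function.leftInverse_invFun hf.injective a

section Bump

variable {X : Type*} [MetricSpace X]

def bump (p : X) (n : ℕ) : C(X, ℝ) :=
  ⟨fun x => max 0 (1 - n * dist x p), by fun_prop⟩

lemma bump_apply (p : X) (n : ℕ) (x : X) : bump p n x = max 0 (1 - n * dist x p) := rfl

lemma norm_bump_le_one (p : X) (n : ℕ) (x : X) : ‖bump p n x‖ ≤ 1 := by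
  have : 0 ≤ (n : ℝ) * dist x p := by positivity
  rw [bump_apply, Real.norm_of_nonneg (le_max_left _ _)]
  exact max_le zero_le_one (by linarith)

lemma tendsto_bump_indicator (p x : X) :
    Tendsto (fun n => bump p n x) atTop (𝓝 (({p} : Set X).indicator 1 x)) := by
  by_cases hx : x = p
  · subst hx
    simp [bump]
  · have hd : 0 < dist x p := dist_pos.mpr hx
    rw [indicator_of_notMem (mem_singleton_iff.not.mpr hx)]
    refine tendsto_const_nhds.congr' ?_
    filter_upwards [eventually_ge_atTop ⌈1 / dist x p⌉₊] with n hn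
    have : 1 ≤ (n : ℝ) * dist x p := by
      rw [← div_le_iff₀ hd]; exact (Nat.ceil_le.mp hn)
    exact (max_eq_left (by linarith)).symm

variable [MeasurableSpace X] [OpensMeasurableSpace X]

lemma tendsto_integral_mul_bump_comp {Y : Type*} [MeasurableSpace Y] {μ : Measure Y}
    [IsFiniteMeasure μ] {g : Y → X} (hg : Measurable g) {w : Y → ℝ}
    (hw : AEStronglyMeasurable w μ) {C : ℝ} (hC : ∀ y, ‖w y‖ ≤ C) (p : X) :
    Tendsto (fun n => ∫ y, w y * bump p n (g y) ∂μ) atTop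
      (𝓝 (∫ y, (g ⁻¹' {p}).indicator w y ∂μ)) := by
  refine tendsto_integral_of_dominated_convergence (fun _ => C)
    (fun n => hw.mul ((bump p n).continuous.measurable.comp hg).aestronglyMeasurable)
    (integrable_const C) (fun n => ae_of_all _ fun y => ?_) (ae_of_all _ fun y => ?_)
  · rw [norm_mul]
    exact (mul_le_of_le_one_right (norm_nonneg _) (norm_bump_le_one p n (g y))).trans (hC y)
  · have := (tendsto_bump_indicator p (g y)).const_mul (w y)
    by_cases hy : g y = p <;> simp_all

lemma tendsto_integral_bump {μ : Measure X} [IsFiniteMeasure μ] (p : X) :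
    Tendsto (fun n => ∫ x, bump p n x ∂μ) atTop (𝓝 (μ.real {p})) := by
  have := tendsto_integral_mul_bump_comp (w := 1) measurable_id aestronglyMeasurable_const
    (fun _ => (norm_one (α := ℝ)).le) p (μ := μ)
  simpa only [Pi.one_apply, one_mul, id, preimage_id_eq,
    integral_indicator_one (isClosed_singleton.measurableSet)] using this

end Bump

/-- For a C¹ orientation-preserving circle homeomorphism `f` (given by a
lift `F`) and a (-1)-measure `μ` of `f`, one has `μ {p} = f'(p) · μ {f(p)}` for every point
`p` of the circle. -/
theorem neg_one_measure_atom_relation (F : ℝ → ℝ)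
    (hlift : ∀ x : ℝ, F (x + 1) = F x + 1)
    (hmono : StrictMono F)
    (hC1 : ContDiff ℝ 1 F)
    (μ : Measure Circle1) (hμ : IsNegOneMeasure F μ)
    (p : Circle1) :
    μ {p} = ENNReal.ofReal (circleDeriv F p) * μ {inducedCircleMap F p} := by
  obtain ⟨hprob, hinv⟩ := hμ
  set f := inducedCircleMap F
  have hf : IsHomeomorph f := isHomeomorph_inducedCircleMap hlift hmono hC1.continuous
  have hgf : Function.invFun f (f p) = p := Function.leftInverse_invFun hf.injective p
  obtain ⟨C, hC⟩ := exists_bound_circleDeriv (hC1.continuous_deriv le_rfl)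
  have hrhs := tendsto_integral_mul_bump_comp hf.continuous_invFun.measurable
    ((measurable_circleDeriv F).comp hf.continuous_invFun.measurable).aestronglyMeasurable
    (fun y => hC _) p (μ := μ)
  have hreal : μ.real {p} = μ.real {f p} * circleDeriv F p := by
    refine tendsto_nhds_unique ((tendsto_integral_bump p).congr fun n => hinv (bump p n)) ?_
    rw [hf.bijective.preimage_invFun_singleton, integral_indicator (measurableSet_singleton _),
      integral_singleton] at hrhs
    simpa only [smul_eq_mul, Function.comp_apply, hgf] using hrhs
  have hderiv : 0 ≤ circleDeriv F p := hmono.monotone.deriv_nonneg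
  rw [← ofReal_measureReal, hreal, mul_comm, ENNReal.ofReal_mul hderiv, ofReal_measureReal]

end
end

section
/- Let ε > 0 and let F be a holomorphic function on the strip S_ε = { z ∈ ℂ : |Im z| < ε } such that F(z+1) = F(z) + 1, F maps ℝ into ℝ, F'(0) = F''(0) = 0, F'''(0) > 0, and the only solutions of F(z) = F(0) in S_ε are the points z ∈ ℤ. Then there exists a holomorphic function G on S_ε with G(z)³ = F(z) − F(0) for all z ∈ S_ε, G mapping ℝ into ℝ, G(0) = 0, and G'(0) > 0. -/
/-!
Dividing out the triple zero at the origin, `F z - F 0 = z ^ 3 h z` with `h` holomorphic on the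
strip. Periodicity gives `F n = F 0 + n` for `n : ℤ`, so `0` is the only zero of `F - F 0` in the
strip and `h` vanishes nowhere. The strip is convex, hence simply connected, so `h` has a
continuous cube root `k`, which is holomorphic by the inverse function theorem for `w ↦ w ^ 3`;
normalise it by `k 0 = (F'''(0) / 6) ^ (1/3) > 0` and put `G z = z k z`.
-/

open Set Topology ComplexConjugate
open scoped Nat

theorem AnalyticAt.exists_eq_add_pow_smul_of_iteratedDeriv_eq_zero
    {𝕜 E : Type*} [NontriviallyNormedField 𝕜] [CharZero 𝕜] [NormedAddCommGroup E]
    [NormedSpace 𝕜 E] [CompleteSpace E] {f : 𝕜 → E} (hf : AnalyticAt 𝕜 f 0) {n : ℕ}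
    (hn : 0 < n) (hvanish : ∀ i, 0 < i → i < n → iteratedDeriv i f 0 = 0) :
    ∃ g : 𝕜 → E, AnalyticAt 𝕜 g 0 ∧ g 0 = (n ! : 𝕜)⁻¹ • iteratedDeriv n f 0 ∧
      ∀ z, f z = f 0 + z ^ n • g z := by
  obtain ⟨F, hF, hfF⟩ := hf.exists_eq_sum_add_pow_mul (n + 1)
  refine ⟨fun z ↦ (n ! : 𝕜)⁻¹ • iteratedDeriv n f 0 + z • F z, by fun_prop, by simp,
    fun z ↦ ?_⟩
  obtain ⟨m, rfl⟩ : ∃ m, n = m + 1 := ⟨n - 1, by omega⟩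
  have hmiddle :
      ∑ i ∈ Finset.range m, (z ^ (i + 1) / (i + 1)!) • iteratedDeriv (i + 1) f 0 = 0 :=
    Finset.sum_eq_zero fun i hi ↦ by
      rw [hvanish (i + 1) i.succ_pos (by simpa using hi), smul_zero]
  rw [hfF z, Finset.sum_range_succ, Finset.sum_range_succ', hmiddle]
  simp only [pow_zero, Nat.factorial_zero, Nat.cast_one, div_one, one_smul, iteratedDeriv_zero,
    smul_add, smul_smul]
  module

theorem DifferentiableOn.exists_eq_add_pow_smul_of_iteratedDeriv_eq_zero {E : Type*}
    [NormedAddCommGroup E] [NormedSpace ℂ E] [CompleteSpace E] {U : Set ℂ} {f : ℂ → E}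
    (hf : DifferentiableOn ℂ f U) (hU : IsOpen U) (h0 : (0 : ℂ) ∈ U) {n : ℕ} (hn : 0 < n)
    (hvanish : ∀ i, 0 < i → i < n → iteratedDeriv i f 0 = 0) :
    ∃ g : ℂ → E, DifferentiableOn ℂ g U ∧ g 0 = (n ! : ℂ)⁻¹ • iteratedDeriv n f 0 ∧
      ∀ z, f z = f 0 + z ^ n • g z := by
  obtain ⟨g, hg, hg0, hfg⟩ :=
    (hf.analyticAt (hU.mem_nhds h0)).exists_eq_add_pow_smul_of_iteratedDeriv_eq_zero hn hvanish
  refine ⟨g, fun z hz ↦ ?_, hg0, hfg⟩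
  rcases eq_or_ne z 0 with rfl | hz0
  · exact hg.differentiableAt.differentiableWithinAt
  have hquot : (fun w ↦ (w ^ n)⁻¹ • (f w - f 0)) =ᶠ[𝓝 z] g := by
    filter_upwards [isOpen_ne.mem_nhds hz0] with w hw
    rw [hfg w, add_sub_cancel_left, inv_smul_smul₀ (pow_ne_zero n hw)]
  refine (DifferentiableAt.congr_of_eventuallyEq ?_ hquot.symm).differentiableWithinAt
  exact ((differentiableAt_id.pow n).inv (pow_ne_zero n hz0)).smul
    ((hf.differentiableAt (hU.mem_nhds hz)).sub_const _)

theorem DifferentiableAt.of_pow_eq {𝕜 E : Type*} [NontriviallyNormedField 𝕜] [CompleteSpace 𝕜]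
    [CharZero 𝕜] [NormedAddCommGroup E] [NormedSpace 𝕜 E] {k h : E → 𝕜} {z : E} {n : ℕ}
    (hh : DifferentiableAt 𝕜 h z) (hkh : ∀ᶠ w in 𝓝 z, k w ^ n = h w) (hk : ContinuousAt k z)
    (hn : n ≠ 0) (hkz : k z ≠ 0) : DifferentiableAt 𝕜 k z := by
  have hpow : HasStrictDerivAt (· ^ n) ((n : 𝕜) * k z ^ (n - 1)) (k z) :=
    hasStrictDerivAt_pow n _
  have hpow' : (n : 𝕜) * k z ^ (n - 1) ≠ 0 :=
    mul_ne_zero (Nat.cast_ne_zero.2 hn) (pow_ne_zero _ hkz)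
  set root := hpow.localInverse _ _ _ hpow'
  have hroot : DifferentiableAt 𝕜 root (h z) := by
    rw [← hkh.self_of_nhds]
    exact (hpow.to_localInverse hpow').hasDerivAt.differentiableAt
  have hk_eq : root ∘ h =ᶠ[𝓝 z] k := by
    filter_upwards [hk.eventually (hpow.eventually_left_inverse hpow'), hkh] with w hw hw'
    rw [Function.comp_apply, ← hw']
    exact hw
  exact (hroot.comp z hh).congr_of_eventuallyEq hk_eq.symm

theorem Convex.isSimplyConnected {E : Type*} [AddCommGroup E] [Module ℝ E] [TopologicalSpace E]
    [ContinuousAdd E] [ContinuousSMul ℝ E] {s : Set E} (hs : Convex ℝ s) (hne : s.Nonempty) :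
    IsSimplyConnected s :=
  have := hs.contractibleSpace hne
  SimplyConnectedSpace.ofContractible s

theorem Complex.exists_differentiableOn_pow_eq {U : Set ℂ} (hUc : IsSimplyConnected U)
    (hUo : IsOpen U) {h : ℂ → ℂ} (hh : DifferentiableOn ℂ h U) (hh0 : ∀ z ∈ U, h z ≠ 0)
    {n : ℕ} (hn : n ≠ 0) {z₀ w₀ : ℂ} (hz₀ : z₀ ∈ U) (hw₀ : w₀ ^ n = h z₀) :
    ∃ k : ℂ → ℂ, DifferentiableOn ℂ k U ∧ (∀ z, k z ^ n = h z) ∧ k z₀ = w₀ := by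
  obtain ⟨k, hkc, hkh⟩ := Complex.exists_continuousOn_pow_eq hUc hUo hh.continuousOn
    (fun ⟨z, hz, h0⟩ ↦ hh0 z hz h0) hn
  have hk0 : ∀ z ∈ U, k z ≠ 0 := fun z hz hk ↦ hh0 z hz (by rw [← hkh, hk, zero_pow hn])
  have hk : DifferentiableOn ℂ k U := fun z hz ↦
    ((hh.differentiableAt (hUo.mem_nhds hz)).of_pow_eq (.of_forall hkh)
      (hkc.continuousAt (hUo.mem_nhds hz)) hn (hk0 z hz)).differentiableWithinAt
  refine ⟨fun z ↦ w₀ / k z₀ * k z, hk.const_mul _, fun z ↦ ?_, ?_⟩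
  · rw [mul_pow, div_pow, hkh, hkh, hw₀, div_self (hh0 z₀ hz₀), one_mul]
  · exact div_mul_cancel₀ w₀ (hk0 z₀ hz₀)

theorem Complex.isDiscrete_setOf_pow_eq_one {n : ℕ} (hn : n ≠ 0) :
    IsDiscrete {w : ℂ | w ^ n = 1} := by
  rw [← Polynomial.nthRootsFinset_toSet (Nat.pos_of_ne_zero hn), isDiscrete_iff_discreteTopology]
  infer_instance

theorem Complex.im_eq_zero_of_continuous_of_im_pow_eq_zero {X : Type*} [TopologicalSpace X]
    [PreconnectedSpace X] {k : X → ℂ} (hk : Continuous k) (hk0 : ∀ x, k x ≠ 0) {n : ℕ}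
    (hn : n ≠ 0) (hpow : ∀ x, (k x ^ n).im = 0) {x₀ : X} (hx₀ : (k x₀).im = 0) (x : X) :
    (k x).im = 0 := by
  -- `conj k / k` is a continuous `n`-th root of unity, hence constant
  set u : X → ℂ := fun x ↦ conj (k x) / k x
  have hu : Continuous u := (Complex.continuous_conj.comp hk).div hk hk0
  have hu_pow : MapsTo u univ {w : ℂ | w ^ n = 1} := fun x _ ↦ by
    change (conj (k x) / k x) ^ n = 1
    rw [div_pow, ← map_pow, Complex.conj_eq_iff_im.2 (hpow x), div_self (pow_ne_zero n (hk0 x))]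
  have hux : u x = u x₀ := isPreconnected_univ.constant_of_mapsTo
    (Complex.isDiscrete_setOf_pow_eq_one hn) hu.continuousOn hu_pow trivial trivial
  rw [← Complex.conj_eq_iff_im] at hx₀ ⊢
  simpa [u, hx₀, div_self (hk0 x₀), div_eq_one_iff_eq (hk0 x)] using hux

theorem apply_intCast_of_apply_add_one {R : Type*} [AddCommGroupWithOne R] {F : R → R}
    (hF : ∀ n : ℤ, F (n + 1) = F n + 1) (n : ℤ) : F n = F 0 + n := by
  induction n using Int.induction_on with
  | zero => simp
  | succ k ih => rw [Int.cast_add, Int.cast_one, hF, ih, add_assoc]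
  | pred k ih =>
    have := hF (-k - 1)
    rw [Int.cast_sub, Int.cast_one, sub_add_cancel, ih] at this
    rw [Int.cast_sub, Int.cast_one, eq_sub_of_add_eq this.symm, add_sub_assoc]

theorem apply_ne_zero_of_eq_add_pow_smul {U : Set ℂ} {F h : ℂ → ℂ} {m : ℕ}
    (hF : ∀ n : ℤ, F (n + 1) = F n + 1) (hpre : ∀ z ∈ U, F z = F 0 → ∃ n : ℤ, z = n)
    (hFh : ∀ z, F z = F 0 + z ^ m • h z) (hh0 : h 0 ≠ 0) {z : ℂ} (hz : z ∈ U) : h z ≠ 0 := by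
  intro hhz
  obtain ⟨n, rfl⟩ := hpre z hz (by rw [hFh, hhz, smul_zero, add_zero])
  have hn : (n : ℂ) = 0 := by
    simpa [hhz] using (apply_intCast_of_apply_add_one hF n).symm.trans (hFh n)
  exact hh0 (hn ▸ hhz)

theorem Complex.im_eq_zero_of_eq_add_pow_smul {f g : ℂ → ℂ} {m : ℕ}
    (hf : ∀ x : ℝ, (f x).im = 0) (hfg : ∀ z, f z = f 0 + z ^ m • g z) (hg0 : (g 0).im = 0)
    (x : ℝ) : (g x).im = 0 := by
  rcases eq_or_ne x 0 with rfl | hx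
  · simpa using hg0
  have hf0 : (f 0).im = 0 := by simpa using hf 0
  have him := congrArg Complex.im (hfg x)
  rw [smul_eq_mul, ← Complex.ofReal_pow, Complex.add_im, Complex.im_ofReal_mul, hf x, hf0,
    zero_add] at him
  exact (mul_eq_zero.1 him.symm).resolve_left (pow_ne_zero m hx)

def strip (ε : ℝ) : Set ℂ := {z : ℂ | |z.im| < ε}

theorem isOpen_strip (ε : ℝ) : IsOpen (strip ε) :=
  isOpen_lt (continuous_abs.comp Complex.continuous_im) continuous_const

theorem convex_strip (ε : ℝ) : Convex ℝ (strip ε) := by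
  have hball : strip ε = Complex.imLm ⁻¹' Metric.ball 0 ε := by
    ext z
    simp [strip]
  rw [hball]
  exact (convex_ball 0 ε).linear_preimage _

theorem ofReal_mem_strip {ε : ℝ} (hε : 0 < ε) (x : ℝ) : (x : ℂ) ∈ strip ε := by
  simpa [strip] using hε

theorem intCast_mem_strip {ε : ℝ} (hε : 0 < ε) (n : ℤ) : (n : ℂ) ∈ strip ε := by
  simpa using ofReal_mem_strip hε n

/-- If `F` is holomorphic on the strip `S_ε = {|Im z| < ε}`, commutes with
the unit translation, preserves ℝ, has `F'(0) = F''(0) = 0` and `F'''(0) > 0` (real), and the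
only solutions of `F z = F 0` in the strip are the integers, then `F − F 0` has a holomorphic
cube root `G` on the strip, real on ℝ, with `G 0 = 0` and `G'(0) > 0` (real). -/
theorem exists_holomorphic_cube_root
    (ε : ℝ) (hε : 0 < ε) (F : ℂ → ℂ)
    (hhol : DifferentiableOn ℂ F {z : ℂ | |z.im| < ε})
    (hper : ∀ z : ℂ, |z.im| < ε → F (z + 1) = F z + 1)
    (hreal : ∀ x : ℝ, (F x).im = 0)
    (hd1 : deriv F 0 = 0)
    (hd2 : iteratedDeriv 2 F 0 = 0)
    (hd3re : 0 < (iteratedDeriv 3 F 0).re)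
    (hd3im : (iteratedDeriv 3 F 0).im = 0)
    (hpre : ∀ z : ℂ, |z.im| < ε → F z = F 0 → ∃ n : ℤ, z = (n : ℂ)) :
    ∃ G : ℂ → ℂ,
      DifferentiableOn ℂ G {z : ℂ | |z.im| < ε} ∧
      (∀ z : ℂ, |z.im| < ε → G z ^ 3 = F z - F 0) ∧
      (∀ x : ℝ, (G x).im = 0) ∧
      G 0 = 0 ∧
      0 < (deriv G 0).re ∧ (deriv G 0).im = 0 := by
  have h0 : (0 : ℂ) ∈ strip ε := by simpa using ofReal_mem_strip hε 0
  obtain ⟨h, hh, hh0, hFh⟩ :=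
    hhol.exists_eq_add_pow_smul_of_iteratedDeriv_eq_zero (isOpen_strip ε) h0 (n := 3)
      (by norm_num) fun i hi hi3 ↦ by interval_cases i <;> simpa
  set r : ℝ := (iteratedDeriv 3 F 0).re / 6
  have hr_pos : 0 < r := by positivity
  have hr : h 0 = r := by
    rw [hh0, ← Complex.re_add_im (iteratedDeriv 3 F 0), hd3im]
    simp [r, Nat.factorial]
    ring
  have hh_ne : ∀ z ∈ strip ε, h z ≠ 0 := fun z ↦ apply_ne_zero_of_eq_add_pow_smul
    (fun n ↦ hper n (intCast_mem_strip hε n)) hpre hFh (by simpa [hr] using hr_pos.ne')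
  obtain ⟨s, hs, hsr⟩ : ∃ s : ℝ, 0 < s ∧ s ^ 3 = r :=
    ⟨r ^ ((3 : ℕ) : ℝ)⁻¹, by positivity, Real.rpow_inv_natCast_pow hr_pos.le three_ne_zero⟩
  obtain ⟨k, hk, hkh, hk0⟩ := Complex.exists_differentiableOn_pow_eq
    ((convex_strip ε).isSimplyConnected ⟨0, h0⟩) (isOpen_strip ε) hh hh_ne three_ne_zero h0
    (w₀ := s) (by rw [hr, ← Complex.ofReal_pow, hsr])
  have hh_real : ∀ x : ℝ, (h x).im = 0 :=
    Complex.im_eq_zero_of_eq_add_pow_smul hreal hFh (by simp [hr])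
  have hk_real : ∀ x : ℝ, (k x).im = 0 :=
    Complex.im_eq_zero_of_continuous_of_im_pow_eq_zero
      (hk.continuousOn.comp_continuous Complex.continuous_ofReal (ofReal_mem_strip hε))
      (fun x hkx ↦ hh_ne x (ofReal_mem_strip hε x) (by rw [← hkh, hkx, zero_pow three_ne_zero]))
      three_ne_zero (fun x ↦ by rw [hkh, hh_real]) (x₀ := 0) (by simp [hk0])
  have hG' : HasDerivAt (fun z ↦ z * k z) s 0 := by
    simpa [hk0] using (hasDerivAt_id' 0).fun_mul
      (hk.differentiableAt ((isOpen_strip ε).mem_nhds h0)).hasDerivAt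
  refine ⟨fun z ↦ z * k z, differentiableOn_id.mul hk, fun z _ ↦ ?_, fun x ↦ ?_, zero_mul _,
    by simpa [hG'.deriv], by simp [hG'.deriv]⟩
  · rw [mul_pow, hkh, hFh z, smul_eq_mul, add_sub_cancel_left]
  · simp [hk_real x]
end

section
/- Let f be a cubic critical circle map with irrational rotation number. Then there exists a constant c > 0, depending on f but not on n, such that for every n the arc f(I_n) has length at most c · M_n³, where I_n is the n-th closest-return arc and M_n = |I_n| its length. -/
open MeasureTheory Filter Metric Set Topology

noncomputable section

/-- Iterates of the Gauss map applied to (the fractional part of) a real number. -/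
noncomputable def gaussIter (α : ℝ) : ℕ → ℝ
  | 0 => Int.fract α
  | n + 1 => Int.fract (gaussIter α n)⁻¹

/-- The continued fraction partial quotients of α: `cfCoeff α (n-1)` is the coefficient
`aₙ` in `α = [a₁, a₂, …]`. -/
noncomputable def cfCoeff (α : ℝ) (n : ℕ) : ℕ := ⌊(gaussIter α n)⁻¹⌋₊

/-- The denominators `qₙ` of the continued fraction convergents of α:
`q₀ = 1`, `q₁ = a₁`, `q_{n+2} = a_{n+2} q_{n+1} + q_n`. -/
noncomputable def cfDenom (α : ℝ) : ℕ → ℕ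
  | 0 => 1
  | 1 => cfCoeff α 0
  | (n + 2) => cfCoeff α (n + 1) * cfDenom α (n + 1) + cfDenom α n

/-- The representative of a real number modulo 1 that is nearest to 0. -/
noncomputable def nearestRep (t : ℝ) : ℝ := t - round t

/-!
A cubic critical point at `0` means `F - F 0` vanishes to third order there, so a bound on `F'''`
over `[-1/2, 1/2]` gives `|F x - F 0| ≤ c |x|³` on that interval, by applying the mean value
inequality three times. Since the representative of `F^[qₙ] 0` nearest to `0` lies in
`[-1/2, 1/2]`, this estimate covers every closest-return arc.
-/

section TaylorBound

variable {𝕜 E : Type*} [RCLike 𝕜] [NormedAddCommGroup E] [NormedSpace 𝕜 E]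

theorem norm_sub_le_mul_norm_pow_succ_of_norm_deriv_le {g : 𝕜 → E} (hg : Differentiable 𝕜 g)
    {r C : ℝ} {n : ℕ} (hC : 0 ≤ C)
    (hbound : ∀ t ∈ closedBall (0 : 𝕜) r, ‖deriv g t‖ ≤ C * ‖t‖ ^ n)
    {x : 𝕜} (hx : x ∈ closedBall (0 : 𝕜) r) :
    ‖g x - g 0‖ ≤ C * ‖x‖ ^ (n + 1) := by
  have hsub : closedBall (0 : 𝕜) ‖x‖ ⊆ closedBall 0 r :=
    closedBall_subset_closedBall (by simpa using hx)
  have hmvt : ‖g x - g 0‖ ≤ C * ‖x‖ ^ n * ‖x - 0‖ :=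
    (convex_closedBall (0 : 𝕜) ‖x‖).norm_image_sub_le_of_norm_deriv_le (fun t _ => hg t)
      (fun t ht => (hbound t (hsub ht)).trans (by gcongr; simpa using ht))
      (by simp) (by simp)
  simpa [pow_succ, mul_assoc] using hmvt

theorem norm_sub_le_mul_norm_pow_of_iteratedDeriv_eq_zero (n : ℕ) {f : 𝕜 → E}
    (hf : ContDiff 𝕜 (n + 1) f) (hvanish : ∀ k, 0 < k → k ≤ n → iteratedDeriv k f 0 = 0)
    {r C : ℝ} (hC : 0 ≤ C)
    (hbound : ∀ t ∈ closedBall (0 : 𝕜) r, ‖iteratedDeriv (n + 1) f t‖ ≤ C)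
    {x : 𝕜} (hx : x ∈ closedBall (0 : 𝕜) r) :
    ‖f x - f 0‖ ≤ C * ‖x‖ ^ (n + 1) := by
  induction n generalizing f x with
  | zero =>
    refine norm_sub_le_mul_norm_pow_succ_of_norm_deriv_le (hf.differentiable (by simp)) hC
      (fun t ht => ?_) hx
    simpa using hbound t ht
  | succ n ih =>
    have hderiv_zero : deriv f 0 = 0 := by simpa using hvanish 1 one_pos (by omega)
    have hderiv_bound : ∀ t ∈ closedBall (0 : 𝕜) r, ‖deriv f t‖ ≤ C * ‖t‖ ^ (n + 1) := by
      intro t ht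
      have hf' : ContDiff 𝕜 (n + 1) (deriv f) := hf.deriv' (n := (n + 1 : ℕ))
      have hvanish' : ∀ k, 0 < k → k ≤ n → iteratedDeriv k (deriv f) 0 = 0 := fun k hk hkn => by
        rw [← iteratedDeriv_succ']
        exact hvanish (k + 1) (by omega) (by omega)
      have hbound' : ∀ s ∈ closedBall (0 : 𝕜) r, ‖iteratedDeriv (n + 1) (deriv f) s‖ ≤ C :=
        fun s hs => by rw [← iteratedDeriv_succ']; exact hbound s hs
      simpa [hderiv_zero] using ih hf' hvanish' hbound' ht
    exact norm_sub_le_mul_norm_pow_succ_of_norm_deriv_le (hf.differentiable (by simp)) hC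
      hderiv_bound hx

theorem exists_pos_norm_sub_le_mul_norm_pow (n : ℕ) {f : 𝕜 → E} (hf : ContDiff 𝕜 (n + 1) f)
    (hvanish : ∀ k, 0 < k → k ≤ n → iteratedDeriv k f 0 = 0) (r : ℝ) :
    ∃ c > 0, ∀ x ∈ closedBall (0 : 𝕜) r, ‖f x - f 0‖ ≤ c * ‖x‖ ^ (n + 1) := by
  obtain ⟨C, hC⟩ := (isCompact_closedBall (0 : 𝕜) r).exists_bound_of_continuousOn
    (hf.continuous_iteratedDeriv (n + 1) le_rfl).continuousOn
  refine ⟨max C 0 + 1, by positivity, fun x hx => ?_⟩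
  have hbound : ∀ t ∈ closedBall (0 : 𝕜) r, ‖iteratedDeriv (n + 1) f t‖ ≤ max C 0 + 1 :=
    fun t ht => (hC t ht).trans ((le_max_left C 0).trans (le_add_of_nonneg_right zero_le_one))
  exact norm_sub_le_mul_norm_pow_of_iteratedDeriv_eq_zero n hf hvanish (by positivity) hbound hx

end TaylorBound

theorem image_of_closest_return_arc_cubic_bound_general (F : ℝ → ℝ)
    (hF : IsCubicCriticalCircleMap F)
    (q : ℕ → ℕ) :
    ∃ c : ℝ, 0 < c ∧ ∀ n : ℕ,
      |F (nearestRep (F^[q n] 0)) - F 0| ≤ c * |nearestRep (F^[q n] 0)| ^ 3 := by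
  have hF3 : ContDiff ℝ (2 + 1) F := AnalyticOnNhd.contDiff fun x _ => hF.analytic x
  have hvanish : ∀ k, 0 < k → k ≤ 2 → iteratedDeriv k F 0 = 0 := by
    intro k hk hk2
    interval_cases k
    · simpa using hF.deriv_zero
    · exact hF.deriv2_zero
  obtain ⟨c, hc, hbound⟩ := exists_pos_norm_sub_le_mul_norm_pow 2 hF3 hvanish (1 / 2)
  refine ⟨c, hc, fun n => ?_⟩
  simpa using hbound _ (by simpa [nearestRep] using abs_sub_round (F^[q n] 0))

/-- For a cubic critical circle map `f` (lift `F`) with irrational rotation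
number there is a constant `c > 0` such that for every `n` the arc `f(Iₙ)` has length at most
`c · Mₙ³`, where `Iₙ` is the `n`-th closest return arc, with endpoints `0` and `f^{qₙ}(0)`
(represented on the real line by the representative of `F^[qₙ] 0` nearest to `0`), and
`Mₙ = |Iₙ|`. -/
theorem image_of_closest_return_arc_cubic_bound (F : ℝ → ℝ)
    (hF : IsCubicCriticalCircleMap F)
    (hirr : Irrational (rotationNumber F))
    (q : ℕ → ℕ) (hq : q = cfDenom (rotationNumber F)) :
    ∃ c : ℝ, 0 < c ∧ ∀ n : ℕ,
      |F (nearestRep (F^[q n] 0)) - F 0| ≤ c * |nearestRep (F^[q n] 0)| ^ 3 :=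
  image_of_closest_return_arc_cubic_bound_general F hF q

end
end
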